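/- arXiv:1604.07791 — 3 statements merged into one kernel-verified Lean document; each statement's English description precedes it below -/
import Mathlib

section
/- Let k ∈ ℕ and N = pq with p, q odd primes, p ≠ q. Let m ∈ ℕ be coprime to N with (m|p)_{2^{k-1}} = (m|q)_{2^{k-1}} = 1, and suppose N ≡ 1 (mod 2^k). Then multiplication by m permutes the set Z_{N,2^{k-1}}, and (m|N)_{2^k} equals the sign of the permutation of Z_{N,2^{k-1}} given by x ↦ mx (mod N). -/
/- The rational `2^k`-th power residue symbol `(a|p)_{2^k}` for a prime `p`. -/
open Classical in
noncomputable def rps (k p : ℕ) (a : ℤ) : ℤ :=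
  if ∃ x : ℤ, x ^ (2 ^ k) ≡ a [ZMOD (p : ℤ)] then 1 else -1

/- The rational `2^k`-th power residue symbol `(a|n)_{2^k}` for composite `n`. -/
noncomputable def rpsN (k n : ℕ) (a : ℤ) : ℤ :=
  (n.primeFactorsList.map fun p => rps k p a).prod

/- `Z_{n,2^k}`: the set of `2^k`-th power residues in `ℤ/nℤ`. -/
open Classical in
noncomputable def QRset (n k : ℕ) [NeZero n] : Finset (ZMod n) :=
  Finset.univ.filter fun r => ∃ x : ℤ, (x : ZMod n) ^ (2 ^ k) = r

open Equiv Equiv.Perm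

private lemma sign_prodCongr'' {α β : Type*} [DecidableEq α] [Fintype α] [DecidableEq β] [Fintype β]
    (σ : Perm α) (τ : Perm β) :
    sign (Equiv.prodCongr σ τ) = sign σ ^ Fintype.card β * sign τ ^ Fintype.card α := by
  have h : (Equiv.prodCongr σ τ) =
      (Equiv.prodCongrLeft fun _ : β => σ) * (Equiv.prodCongrRight fun _ : α => τ) := by
    apply Equiv.ext; rintro ⟨a, b⟩; rfl
  rw [h, map_mul, sign_prodCongrLeft, sign_prodCongrRight]
  simp [Finset.prod_const, Finset.card_univ]

private lemma sign_mulLeft_gen {G : Type*} [Group G] [Fintype G] [DecidableEq G]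
    (γ : G) (hγ : ∀ x, x ∈ Subgroup.zpowers γ) :
    sign (Equiv.mulLeft γ) = (-1) ^ (Fintype.card G + 1) := by
  by_cases h1 : γ = 1
  · have hcard : Fintype.card G = 1 := by
      have : ∀ x : G, x = 1 := by
        intro x; obtain ⟨t, ht⟩ := Subgroup.mem_zpowers_iff.mp (hγ x)
        rw [← ht, h1, one_zpow]
      rw [Fintype.card_eq_one_iff]; exact ⟨1, fun x => this x⟩
    rw [h1, hcard]
    simp [Equiv.mulLeft_one]
  · have hfix : ∀ x : G, Equiv.mulLeft γ x ≠ x := by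
      intro x hx
      exact h1 (by simpa using hx)
    have hcyc : (Equiv.mulLeft γ).IsCycle := by
      refine ⟨1, hfix 1, fun y _ => ?_⟩
      obtain ⟨t, ht⟩ := Subgroup.mem_zpowers_iff.mp (hγ y)
      exact ⟨t, by simp [Equiv.zpow_mulLeft, ht]⟩
    have hsupp : (Equiv.mulLeft γ).support = Finset.univ := by
      apply Finset.eq_univ_iff_forall.mpr
      intro x; exact Equiv.Perm.mem_support.mpr (hfix x)
    rw [hcyc.sign, hsupp, Finset.card_univ, pow_succ]
    rw [mul_neg_one]

private lemma exists_solve (n s : ℕ) :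
    (∃ t : ℤ, t * 2 ≡ (s : ℤ) [ZMOD (n : ℤ)]) ↔ Nat.gcd 2 n ∣ s := by
  have h2 : Int.gcd 2 (n : ℤ) = Nat.gcd 2 n := by
    rw [Int.gcd]; norm_num
  rw [← h2, Int.gcd_dvd_iff]
  constructor
  · rintro ⟨t, ht⟩
    obtain ⟨y, hy⟩ := Int.ModEq.dvd ht
    exact ⟨t, y, by linarith⟩
  · rintro ⟨x, y, hxy⟩
    refine ⟨x, ?_⟩
    exact Int.modEq_iff_dvd.mpr ⟨y, by linarith⟩

private lemma rps_cases (k p : ℕ) (a : ℤ) : rps k p a = 1 ∨ rps k p a = -1 := by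
  unfold rps; split <;> simp

private lemma prime_case (k p : ℕ) (hk : 1 ≤ k) (hp : p.Prime) [NeZero p]
    (m : ℕ) (hm : Nat.Coprime m p) (hmp : rps (k - 1) p (m : ℤ) = 1) :
    ∃ (σ : Equiv.Perm (QRset p (k - 1))) (n : ℕ),
      (∀ x : QRset p (k - 1), ((σ x : ZMod p)) = (m : ZMod p) * (x : ZMod p)) ∧
      ((Equiv.Perm.sign σ : ℤ) = rps k p (m : ℤ)) ∧
      (QRset p (k - 1)).card = n + 1 ∧
      (Even n ↔ 2 ^ k ∣ p - 1) ∧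
      (¬ (2 ^ k ∣ p - 1) → rps k p (m : ℤ) = 1) := by
  classical
  haveI : Fact p.Prime := ⟨hp⟩
  set e := 2 ^ (k - 1) with he
  have he0 : e ≠ 0 := by positivity
  have h2k : 2 ^ k = e * 2 := by
    rw [he, ← pow_succ]
    congr 1
    omega
  obtain ⟨g, hg⟩ := IsCyclic.exists_generator (α := (ZMod p)ˣ)
  set γ : (ZMod p)ˣ := g ^ e with hγdef
  set mu : (ZMod p)ˣ := ZMod.unitOfCoprime m hm with hmudef
  have hmucoe : ((mu : ZMod p)) = (m : ZMod p) := ZMod.coe_unitOfCoprime m hm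
  -- generic conversion: ∃ x : ℤ over ZMod p vs units
  have hunit_ex : ∀ (E : ℕ), E ≠ 0 → ∀ u : (ZMod p)ˣ,
      ((∃ x : ℤ, (x : ZMod p) ^ E = (u : ZMod p)) ↔ (∃ v : (ZMod p)ˣ, v ^ E = u)) := by
    intro E hE u
    constructor
    · rintro ⟨x, hx⟩
      have hx0 : (x : ZMod p) ≠ 0 := by
        intro h0
        rw [h0, zero_pow hE] at hx
        exact (Units.ne_zero u) hx.symm
      obtain ⟨v, hv⟩ := (isUnit_iff_ne_zero.mpr hx0)
      refine ⟨v, Units.ext ?_⟩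
      rw [Units.val_pow_eq_pow_val, hv, hx]
    · rintro ⟨v, hv⟩
      refine ⟨(((v : ZMod p)).val : ℤ), ?_⟩
      have : ((((v : ZMod p)).val : ℤ) : ZMod p) = (v : ZMod p) := by
        push_cast
        simp [ZMod.natCast_val, ZMod.cast_id]
      rw [this, ← Units.val_pow_eq_pow_val, hv]
  have hcond : ∀ E : ℕ, E ≠ 0 →
      ((∃ x : ℤ, x ^ E ≡ (m : ℤ) [ZMOD (p : ℤ)]) ↔ ∃ v : (ZMod p)ˣ, v ^ E = mu) := by
    intro E hE
    rw [← hunit_ex E hE mu]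
    constructor
    · rintro ⟨x, hx⟩
      refine ⟨x, ?_⟩
      have := (ZMod.intCast_eq_intCast_iff _ _ _).mpr hx
      push_cast at this
      rw [hmucoe]
      exact this
    · rintro ⟨x, hx⟩
      refine ⟨x, (ZMod.intCast_eq_intCast_iff _ _ _).mp ?_⟩
      push_cast
      rw [hx, hmucoe]
  -- m is an e-th power of a unit
  have hmue : ∃ v : (ZMod p)ˣ, v ^ e = mu := by
    apply (hcond e he0).mp
    by_contra hcon
    rw [rps, if_neg hcon] at hmp
    norm_num at hmp
  set H : Subgroup (ZMod p)ˣ := Subgroup.zpowers γ with hHdef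
  have hpow_comm : ∀ (u : (ZMod p)ˣ) (t : ℤ), (u ^ t) ^ e = (u ^ e) ^ t := by
    intro u t
    rw [← zpow_natCast (u ^ t) e, ← zpow_mul, mul_comm, zpow_mul, zpow_natCast]
  have hH : ∀ u : (ZMod p)ˣ, u ^ e ∈ H := by
    intro u
    obtain ⟨t, ht⟩ := Subgroup.mem_zpowers_iff.mp (hg u)
    refine Subgroup.mem_zpowers_iff.mpr ⟨t, ?_⟩
    rw [hγdef, ← hpow_comm g t, ht]
  have hHe : ∀ h : H, ∃ u : (ZMod p)ˣ, u ^ e = (h : (ZMod p)ˣ) := by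
    intro h
    obtain ⟨t, ht⟩ := Subgroup.mem_zpowers_iff.mp h.2
    exact ⟨g ^ t, by rw [hpow_comm g t, ← hγdef, ht]⟩
  -- membership in QRset
  have hmem : ∀ r : ZMod p,
      r ∈ QRset p (k - 1) ↔ (r = 0 ∨ ∃ h : H, ((h : (ZMod p)ˣ) : ZMod p) = r) := by
    intro r
    rw [QRset, Finset.mem_filter]
    simp only [Finset.mem_univ, true_and]
    constructor
    · rintro ⟨x, hx⟩
      by_cases hr : r = 0
      · exact Or.inl hr
      · obtain ⟨v, hv⟩ := (hunit_ex e he0 (isUnit_iff_ne_zero.mpr hr).unit).mp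
          ⟨x, by rw [hx, IsUnit.unit_spec]⟩
        refine Or.inr ⟨⟨v ^ e, hH v⟩, ?_⟩
        show ((v ^ e : (ZMod p)ˣ) : ZMod p) = r
        rw [hv, IsUnit.unit_spec]
    · rintro (hr | ⟨h, hr⟩)
      · exact ⟨0, by rw [Int.cast_zero, zero_pow he0, hr]⟩
      · obtain ⟨u, hu⟩ := hHe h
        obtain ⟨x, hx⟩ := (hunit_ex e he0 (h : (ZMod p)ˣ)).mpr ⟨u, hu⟩
        exact ⟨x, by rw [hx, hr]⟩
  have hmuH : mu ∈ H := by
    obtain ⟨v, hv⟩ := hmue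
    rw [← hv]; exact hH v
  set muH : H := ⟨mu, hmuH⟩ with hmuHdef
  set γH : H := ⟨γ, Subgroup.mem_zpowers γ⟩ with hγHdef
  have hgenH : ∀ h : H, h ∈ Subgroup.zpowers γH := by
    intro h
    obtain ⟨t, ht⟩ := Subgroup.mem_zpowers_iff.mp h.2
    refine Subgroup.mem_zpowers_iff.mpr ⟨t, ?_⟩
    apply Subtype.ext
    rw [← ht]
    push_cast
    rfl
  set n : ℕ := Fintype.card H with hndef
  have horderγH : orderOf γH = n :=
    (orderOf_eq_card_of_forall_mem_zpowers hgenH).trans Nat.card_eq_fintype_card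
  obtain ⟨s, hs⟩ : ∃ s : ℕ, γH ^ s = muH := by
    have := mem_powers_iff_mem_zpowers.mpr (hgenH muH)
    exact Submonoid.mem_powers_iff _ _ |>.mp this
  -- the 2^k-th power condition in terms of s
  have hcond2 : (∃ v : (ZMod p)ˣ, v ^ (2 ^ k) = mu) ↔ Nat.gcd 2 n ∣ s := by
    rw [← exists_solve n s]
    constructor
    · rintro ⟨v, hv⟩
      have hve : (⟨v ^ e, hH v⟩ : H) ^ 2 = muH := by
        apply Subtype.ext
        push_cast
        rw [← pow_mul, ← h2k, hv]
      obtain ⟨t, ht⟩ := Subgroup.mem_zpowers_iff.mp (hgenH ⟨v ^ e, hH v⟩)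
      refine ⟨t, ?_⟩
      have key : γH ^ (t * 2) = γH ^ ((s : ℕ) : ℤ) := by
        rw [zpow_mul, zpow_natCast, show ((2:ℤ)) = ((2:ℕ):ℤ) by norm_num, zpow_natCast,
          ht, hve, ← hs]
      have := zpow_eq_zpow_iff_modEq.mp key
      rwa [horderγH] at this
    · rintro ⟨t, ht⟩
      have key : (γH ^ t) ^ (2:ℕ) = muH := by
        rw [← zpow_natCast (γH ^ t) 2, ← zpow_mul, ← hs, ← zpow_natCast γH s]
        apply zpow_eq_zpow_iff_modEq.mpr
        rwa [horderγH]
      obtain ⟨u, hu⟩ := hHe (γH ^ t)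
      refine ⟨u, ?_⟩
      rw [h2k, pow_mul, hu]
      calc ((γH ^ t : H) : (ZMod p)ˣ) ^ 2 = (((γH ^ t) ^ (2:ℕ) : H) : (ZMod p)ˣ) := by push_cast; rfl
        _ = mu := by rw [key]
  -- value of rps k p m
  have hrpsval : rps k p (m : ℤ) = (-1 : ℤ) ^ ((n + 1) * s) := by
    have hiff : (∃ x : ℤ, x ^ (2 ^ k) ≡ (m : ℤ) [ZMOD (p : ℤ)]) ↔ Nat.gcd 2 n ∣ s :=
      (hcond (2 ^ k) (by positivity)).trans hcond2
    by_cases hn : Even n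
    · have hgcd : Nat.gcd 2 n = 2 := Nat.gcd_eq_left ((even_iff_two_dvd).mp hn)
      have hodd : ¬ Even (n + 1) := by simp [Nat.even_add_one, hn]
      rw [pow_mul]
      rw [(Odd.neg_one_pow (Nat.not_even_iff_odd.mp hodd) : (-1:ℤ) ^ (n+1) = -1)]
      by_cases hsx : 2 ∣ s
      · rw [rps, if_pos (hiff.mpr (by rw [hgcd]; exact hsx))]
        rw [(Even.neg_one_pow (even_iff_two_dvd.mpr hsx) : ((-1:ℤ)) ^ s = 1)]
      · rw [rps, if_neg (fun hc => hsx (by rw [← hgcd]; exact hiff.mp hc))]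
        rw [(Odd.neg_one_pow (Nat.not_even_iff_odd.mp (by simpa [even_iff_two_dvd] using hsx)) : ((-1:ℤ)) ^ s = -1)]
    · have hgcd : Nat.gcd 2 n = 1 := Nat.coprime_two_left.mpr (Nat.not_even_iff_odd.mp hn)
      rw [rps, if_pos (hiff.mpr (by rw [hgcd]; exact one_dvd s))]
      have : Even ((n + 1) * s) := (Nat.even_add_one.mpr hn).mul_right s
      rw [(Even.neg_one_pow this : ((-1:ℤ)) ^ ((n+1)*s) = 1)]
  -- the permutation
  set F : H → {x : QRset p (k - 1) // (x : ZMod p) ≠ 0} := fun h =>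
    ⟨⟨((h : (ZMod p)ˣ) : ZMod p), (hmem _).mpr (Or.inr ⟨h, rfl⟩)⟩, Units.ne_zero _⟩ with hFdef
  have hFbij : Function.Bijective F := by
    constructor
    · intro a b hab
      apply Subtype.ext
      apply Units.ext
      exact congrArg (fun z => (z.1 : ZMod p)) hab
    · rintro ⟨⟨r, hr⟩, hne⟩
      rcases (hmem r).mp hr with h0 | ⟨h, hh⟩
      · exact absurd h0 hne
      · exact ⟨h, by apply Subtype.ext; apply Subtype.ext; exact hh⟩
  set f : H ≃ {x : QRset p (k - 1) // (x : ZMod p) ≠ 0} := Equiv.ofBijective F hFbij with hfdef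
  set π : Equiv.Perm H := Equiv.mulLeft muH with hπdef
  set σ : Equiv.Perm (QRset p (k - 1)) := π.extendDomain f with hσdef
  have hpoint : ∀ x : QRset p (k - 1), ((σ x : ZMod p)) = (m : ZMod p) * (x : ZMod p) := by
    intro x
    by_cases hx : (x : ZMod p) ≠ 0
    · have happ := π.extendDomain_apply_subtype f hx
      have hfs : f (f.symm ⟨x, hx⟩) = ⟨x, hx⟩ := f.apply_symm_apply _
      set h0 : H := f.symm ⟨x, hx⟩ with hh0
      have hval : ((h0 : (ZMod p)ˣ) : ZMod p) = (x : ZMod p) := by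
        have := congrArg (fun z => ((z.1 : ZMod p))) hfs
        exact this
      rw [hσdef, happ]
      show (((π h0 : H) : (ZMod p)ˣ) : ZMod p) = _
      rw [hπdef]
      show (((muH * h0 : H) : (ZMod p)ˣ) : ZMod p) = _
      push_cast
      rw [hmucoe, hval]
    · push_neg at hx
      rw [hσdef, π.extendDomain_apply_not_subtype f (by simpa using hx), hx, mul_zero]
  have hsign : (Equiv.Perm.sign σ : ℤ) = (-1 : ℤ) ^ ((n + 1) * s) := by
    have h1 : Equiv.Perm.sign σ = Equiv.Perm.sign π := Equiv.Perm.sign_extendDomain π f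
    have h2 : Equiv.Perm.sign π = (-1 : ℤˣ) ^ ((n + 1) * s) := by
      rw [hπdef, ← hs, ← Equiv.pow_mulLeft, map_pow,
        sign_mulLeft_gen γH hgenH, ← pow_mul, ← hndef]
    rw [h1, h2]
    push_cast
    rfl
  -- cardinality
  have hQeq : QRset p (k - 1) =
      insert (0 : ZMod p) (Finset.image (fun h : H => ((h : (ZMod p)ˣ) : ZMod p)) Finset.univ) := by
    ext r
    rw [hmem r, Finset.mem_insert, Finset.mem_image]
    simp
  have hcard : (QRset p (k - 1)).card = n + 1 := by
    rw [hQeq, Finset.card_insert_of_notMem, Finset.card_image_of_injective _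
      (fun a b hab => Subtype.ext (Units.ext hab)), Finset.card_univ]
    simp only [Finset.mem_image, Finset.mem_univ, true_and, not_exists]
    exact fun h => Units.ne_zero _
  -- order computation
  have horderg : orderOf g = p - 1 := by
    rw [orderOf_eq_card_of_forall_mem_zpowers hg, Nat.card_eq_fintype_card, ZMod.card_units]
  have hnval : n = (p - 1) / Nat.gcd (p - 1) e := by
    rw [← horderγH, hγHdef, Subgroup.orderOf_mk, hγdef, orderOf_pow, horderg]
  have hP0 : p - 1 ≠ 0 := by
    have := hp.two_le
    omega
  have hparity : Even n ↔ 2 ^ k ∣ p - 1 := by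
    constructor
    · intro hn
      obtain ⟨n', hn'⟩ := (even_iff_two_dvd).mp hn
      have hdvd : Nat.gcd (p - 1) e ∣ e := Nat.gcd_dvd_right _ _
      obtain ⟨j, hjk, hj⟩ := (Nat.dvd_prime_pow Nat.prime_two).mp hdvd
      have hPd : p - 1 = Nat.gcd (p - 1) e * n := by
        rw [hnval, Nat.mul_div_cancel' (Nat.gcd_dvd_left _ _)]
      have hjk1 : j = k - 1 := by
        by_contra hne
        have hjlt : j + 1 ≤ k - 1 := by omega
        have h1 : 2 ^ (j + 1) ∣ p - 1 := by
          rw [hPd, hj, hn', pow_succ]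
          exact Nat.mul_dvd_mul dvd_rfl (Dvd.intro n' rfl)
        have h2' : 2 ^ (j + 1) ∣ e := by rw [he]; exact pow_dvd_pow 2 hjlt
        have h3 : 2 ^ (j + 1) ∣ 2 ^ j := hj ▸ Nat.dvd_gcd h1 h2'
        have := (Nat.pow_dvd_pow_iff_le_right (by norm_num : 1 < 2)).mp h3
        omega
      rw [hPd, hj, hjk1, hn']
      refine ⟨n', ?_⟩
      rw [← mul_assoc, ← pow_succ]
      congr 1
      omega
    · intro hdvd
      have hed : e ∣ p - 1 := dvd_trans (by rw [he, h2k]; exact Dvd.intro 2 rfl) hdvd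
      have hgcd : Nat.gcd (p - 1) e = e := Nat.gcd_eq_right hed
      have hPd : p - 1 = e * n := by
        rw [hnval, hgcd, Nat.mul_div_cancel' hed]
      have h2 : e * 2 ∣ e * n := by
        rw [← hPd, ← h2k]
        exact hdvd
      have := (Nat.mul_dvd_mul_iff_left (Nat.pos_of_ne_zero he0)).mp h2
      exact (even_iff_two_dvd).mpr this
  refine ⟨σ, n, hpoint, by rw [hsign, hrpsval], hcard, hparity, ?_⟩
  intro hnd
  rw [hrpsval]
  have hnodd : ¬ Even n := fun hc => hnd (hparity.mp hc)
  have : Even ((n + 1) * s) := (Nat.even_add_one.mpr hnodd).mul_right s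
  exact Even.neg_one_pow this

private lemma pow_pm_one (a : ℤ) (ha : a = 1 ∨ a = -1) {t : ℕ} (ht : Odd t) : a ^ t = a := by
  rcases ha with h | h <;> rw [h] <;> simp [Odd.neg_one_pow ht]

theorem statement11 (k p q : ℕ) (hk : 1 ≤ k) (hp : p.Prime) (hq : q.Prime)
    [NeZero p] [NeZero q] (hpo : Odd p) (hqo : Odd q) (hpq : p ≠ q)
    (m : ℕ) (hm : Nat.Coprime m (p * q))
    (hmp : rps (k - 1) p (m : ℤ) = 1) (hmq : rps (k - 1) q (m : ℤ) = 1)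
    (hN : (p * q) ≡ 1 [MOD 2 ^ k]) :
    ∃ σ : Equiv.Perm (QRset (p * q) (k - 1)),
      (∀ x : QRset (p * q) (k - 1),
        ((σ x : ZMod (p * q))) = (m : ZMod (p * q)) * (x : ZMod (p * q))) ∧
      (Equiv.Perm.sign σ : ℤ) = rpsN k (p * q) (m : ℤ) := by
  classical
  haveI fp : Fact p.Prime := ⟨hp⟩
  haveI fq : Fact q.Prime := ⟨hq⟩
  have hmpcop : Nat.Coprime m p := (Nat.coprime_mul_iff_right.mp hm).1
  have hmqcop : Nat.Coprime m q := (Nat.coprime_mul_iff_right.mp hm).2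
  obtain ⟨σp, np, hσp, hsp, hcp, hevp, hnegp⟩ := prime_case k p hk hp m hmpcop hmp
  obtain ⟨σq, nq, hσq, hsq, hcq, hevq, hnegq⟩ := prime_case k q hk hq m hmqcop hmq
  have hcop : Nat.Coprime p q := (Nat.coprime_primes hp hq).mpr hpq
  set φ := ZMod.chineseRemainder hcop with hφdef
  have he0 : (2:ℕ) ^ (k-1) ≠ 0 := by positivity
  have hmemN : ∀ r : ZMod (p*q), r ∈ QRset (p*q) (k-1) ↔
      ((φ r).1 ∈ QRset p (k-1) ∧ (φ r).2 ∈ QRset q (k-1)) := by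
    intro r
    simp only [QRset, Finset.mem_filter, Finset.mem_univ, true_and]
    constructor
    · rintro ⟨x, hx⟩
      constructor
      · exact ⟨x, by rw [← hx, map_pow, map_intCast]; simp⟩
      · exact ⟨x, by rw [← hx, map_pow, map_intCast]; simp⟩
    · rintro ⟨⟨x, hx⟩, ⟨y, hy⟩⟩
      set w : ZMod (p*q) := φ.symm ((x : ZMod p), (y : ZMod q)) with hw
      refine ⟨(w.val : ℤ), ?_⟩
      have hwz : (((w.val : ℤ)) : ZMod (p*q)) = w := by
        push_cast
        simp [ZMod.natCast_val, ZMod.cast_id]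
      rw [hwz]
      apply φ.injective
      rw [map_pow, hw, RingEquiv.apply_symm_apply]
      apply Prod.ext
      · simpa using hx
      · simpa using hy
  set Ψ : (QRset (p*q) (k-1) : Finset (ZMod (p*q))) ≃
      ((QRset p (k-1) : Finset (ZMod p)) × (QRset q (k-1) : Finset (ZMod q))) :=
    (φ.toEquiv.subtypeEquiv hmemN).trans (Equiv.subtypeProdEquivProd) with hΨdef
  set σ : Equiv.Perm (QRset (p*q) (k-1)) :=
    Ψ.symm.permCongr (Equiv.prodCongr σp σq) with hσdef
  have hΨ1 : ∀ x : QRset (p*q) (k-1), ((Ψ x).1 : ZMod p) = (φ (x : ZMod (p*q))).1 := fun x => rfl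
  have hΨ2 : ∀ x : QRset (p*q) (k-1), ((Ψ x).2 : ZMod q) = (φ (x : ZMod (p*q))).2 := fun x => rfl
  have hΨs : ∀ (a : (QRset p (k-1) : Finset (ZMod p))) (b : (QRset q (k-1) : Finset (ZMod q))),
      ((Ψ.symm (a, b) : ZMod (p*q))) = φ.symm ((a : ZMod p), (b : ZMod q)) := fun a b => rfl
  have hpointN : ∀ x : QRset (p*q) (k-1),
      ((σ x : ZMod (p*q))) = (m : ZMod (p*q)) * (x : ZMod (p*q)) := by
    intro x
    have h1 : σ x = Ψ.symm (σp (Ψ x).1, σq (Ψ x).2) := rfl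
    rw [h1, hΨs, hσp, hσq, hΨ1, hΨ2]
    have h2 : φ ((m : ZMod (p*q)) * (x : ZMod (p*q))) =
        ((m : ZMod p) * (φ (x : ZMod (p*q))).1, (m : ZMod q) * (φ (x : ZMod (p*q))).2) := by
      rw [map_mul, map_natCast]
      apply Prod.ext <;> simp
    rw [← h2, RingEquiv.symm_apply_apply]
  refine ⟨σ, hpointN, ?_⟩
  have hsgn : (Equiv.Perm.sign σ : ℤ) =
      (Equiv.Perm.sign σp : ℤ) ^ (QRset q (k-1)).card *
        (Equiv.Perm.sign σq : ℤ) ^ (QRset p (k-1)).card := by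
    rw [hσdef, Equiv.Perm.sign_permCongr, sign_prodCongr'', Fintype.card_coe, Fintype.card_coe]
    push_cast
    rfl
  have hrpsN : rpsN k (p*q) (m : ℤ) = rps k p (m : ℤ) * rps k q (m : ℤ) := by
    rw [rpsN]
    have hperm := Nat.perm_primeFactorsList_mul hp.ne_zero hq.ne_zero
    rw [List.Perm.prod_eq (hperm.map fun r => rps k r (m : ℤ))]
    rw [Nat.primeFactorsList_prime hp, Nat.primeFactorsList_prime hq]
    simp
  rw [hrpsN, hsgn, hsp, hsq, hcp, hcq]
  by_cases hd : 2 ^ k ∣ p - 1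
  · have hp1 : (1 : ℕ) ≡ p [MOD 2 ^ k] := (Nat.modEq_iff_dvd' hp.one_le).mpr hd
    have hq1 : q ≡ 1 [MOD 2 ^ k] := by
      calc q = 1 * q := (one_mul q).symm
        _ ≡ p * q [MOD 2 ^ k] := Nat.ModEq.mul_right q hp1
        _ ≡ 1 [MOD 2 ^ k] := hN
    have hdq : 2 ^ k ∣ q - 1 := (Nat.modEq_iff_dvd' hq.one_le).mp hq1.symm
    rw [pow_pm_one _ (rps_cases k p (m:ℤ)) (Even.add_one (hevq.mpr hdq)),
      pow_pm_one _ (rps_cases k q (m:ℤ)) (Even.add_one (hevp.mpr hd))]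
  · have hdq : ¬ 2 ^ k ∣ q - 1 := by
      intro hc
      apply hd
      have hq1 : (1 : ℕ) ≡ q [MOD 2 ^ k] := (Nat.modEq_iff_dvd' hq.one_le).mpr hc
      have hp1 : p ≡ 1 [MOD 2 ^ k] := by
        calc p = p * 1 := (mul_one p).symm
          _ ≡ p * q [MOD 2 ^ k] := Nat.ModEq.mul_left p hq1
          _ ≡ 1 [MOD 2 ^ k] := hN
      exact (Nat.modEq_iff_dvd' hp.one_le).mp hp1.symm
    rw [hnegp hd, hnegq hdq]
    simp
end

section
/- Let N ∈ ℕ and a ∈ ℤ with gcd(N, a) = 1. If the diophantine equation N = X² + Y² is solvable over the integers, then (a²|N)_4 = (a|N)_2. -/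
lemma rps_cast (p : ℕ) [NeZero p] (m : ℕ) (a : ℤ) :
    (∃ x : ℤ, x ^ m ≡ a [ZMOD (p : ℤ)]) ↔ ∃ y : ZMod p, y ^ m = (a : ZMod p) := by
  constructor
  · rintro ⟨x, hx⟩
    refine ⟨(x : ZMod p), ?_⟩
    have := (ZMod.intCast_eq_intCast_iff _ _ _).2 hx
    push_cast at this
    exact this
  · rintro ⟨y, hy⟩
    refine ⟨(ZMod.cast y : ℤ), (ZMod.intCast_eq_intCast_iff _ _ _).1 ?_⟩
    push_cast
    exact hy

lemma rps_eq_one_iff (k p : ℕ) [NeZero p] (a : ℤ) :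
    rps k p a = 1 ↔ ∃ y : ZMod p, y ^ (2 ^ k) = (a : ZMod p) := by
  rw [rps, ← rps_cast]
  split_ifs with h <;> simp [h]

lemma rps_sq (k p : ℕ) (a : ℤ) : rps k p a ^ 2 = 1 := by
  rw [rps]; split_ifs <;> norm_num

lemma rps_two (k : ℕ) (a : ℤ) (ha : Odd a) : rps k 2 a = 1 := by
  have : NeZero 2 := ⟨two_ne_zero⟩
  rw [rps_eq_one_iff]
  obtain ⟨m, rfl⟩ := ha
  exact ⟨1, by push_cast; rw [one_pow, show (2 : ZMod 2) = 0 from rfl]; ring⟩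

lemma rps_one_mod_four (p : ℕ) [Fact p.Prime] (hp : p % 4 = 1) (a : ℤ) :
    rps 2 p (a ^ 2) = rps 1 p a := by
  have hne : NeZero p := ⟨(Fact.out : p.Prime).ne_zero⟩
  have h1 : rps 2 p (a ^ 2) = 1 ↔ rps 1 p a = 1 := by
    rw [rps_eq_one_iff, rps_eq_one_iff]
    obtain ⟨i, hi⟩ : IsSquare (-1 : ZMod p) := ZMod.exists_sq_eq_neg_one_iff.2 (by omega)
    constructor
    · rintro ⟨y, hy⟩
      push_cast at hy
      have h0 : ((y ^ 2 : ZMod p) - a) * ((y ^ 2 : ZMod p) + a) = 0 := by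
        linear_combination hy
      rcases mul_eq_zero.1 h0 with h | h
      · exact ⟨y, by linear_combination h⟩
      · exact ⟨i * y, by linear_combination (-(y^2)) * hi - h⟩
    · rintro ⟨y, hy⟩
      exact ⟨y, by push_cast; linear_combination (y^(2^1) + (a : ZMod p)) * hy⟩
  rcases show rps 2 p (a ^ 2) = 1 ∨ rps 2 p (a ^ 2) = -1 from by rw [rps]; split_ifs <;> simp with
    h2 | h2 <;> rcases show rps 1 p a = 1 ∨ rps 1 p a = -1 from by rw [rps]; split_ifs <;> simp
    with h3 | h3 <;> simp_all

lemma rps_three_mod_four (p : ℕ) [Fact p.Prime] (hp : p % 4 = 3) (a : ℤ)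
    (ha : (a : ZMod p) ≠ 0) : rps 2 p (a ^ 2) = 1 := by
  have hne : NeZero p := ⟨(Fact.out : p.Prime).ne_zero⟩
  rw [rps_eq_one_iff]
  suffices h : ∃ y : ZMod p, y ^ 4 = (a : ZMod p) ^ 2 by
    obtain ⟨y, hy⟩ := h
    exact ⟨y, by push_cast; linear_combination hy⟩
  by_cases hs : IsSquare ((a : ZMod p))
  · obtain ⟨c, hc⟩ := hs
    exact ⟨c, by linear_combination (-((a : ZMod p) + c * c)) * hc⟩
  · have hns : ¬ IsSquare (-1 : ZMod p) := by
      rw [ZMod.exists_sq_eq_neg_one_iff]; omega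
    have hb : quadraticChar (ZMod p) (a : ZMod p) = -1 :=
      quadraticChar_neg_one_iff_not_isSquare.2 hs
    have hm1 : quadraticChar (ZMod p) (-1) = -1 :=
      quadraticChar_neg_one_iff_not_isSquare.2 hns
    have h1 : quadraticChar (ZMod p) (-(a : ZMod p)) = 1 := by
      rw [show (-(a : ZMod p)) = (-1) * a by ring, map_mul, hb, hm1]; ring
    obtain ⟨c, hc⟩ := (quadraticChar_one_iff_isSquare (neg_ne_zero.2 ha)).1 h1
    exact ⟨c, by linear_combination ((a : ZMod p) - c * c) * hc⟩

theorem statement12 (N : ℕ) (a : ℤ) (h : Int.gcd (N : ℤ) a = 1)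
    (hsol : ∃ X Y : ℤ, (N : ℤ) = X ^ 2 + Y ^ 2) :
    rpsN 2 N (a ^ 2) = rpsN 1 N a := by
  obtain ⟨X, Y, hXY⟩ := hsol
  have hsq : ∀ q : ℕ, q.Prime → q % 4 = 3 → Even (N.primeFactorsList.count q) := by
    intro q hq h3
    rw [Nat.primeFactorsList_count_eq, Nat.factorization_def N hq]
    by_cases hmem : q ∈ N.primeFactors
    swap
    · rw [← Nat.factorization_def N hq, Finsupp.notMem_support_iff.mp (by rwa [Nat.support_factorization])]
      exact Even.zero
    refine Nat.eq_sq_add_sq_iff.1 ⟨X.natAbs, Y.natAbs, ?_⟩ q hmem h3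
    have : (N : ℤ) = (X.natAbs : ℤ) ^ 2 + (Y.natAbs : ℤ) ^ 2 := by
      rw [hXY, Int.natAbs_sq, Int.natAbs_sq]
    exact_mod_cast this
  have conv : ∀ f : ℕ → ℤ, (N.primeFactorsList.map f).prod =
      ∏ q ∈ N.primeFactorsList.toFinset, f q ^ N.primeFactorsList.count q := by
    intro f
    simpa using Finset.prod_multiset_map_count (↑N.primeFactorsList : Multiset ℕ) f
  rw [rpsN, rpsN, conv, conv]
  refine Finset.prod_congr rfl fun q hq => ?_
  rw [List.mem_toFinset] at hq
  have hqp : q.Prime := Nat.prime_of_mem_primeFactorsList hq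
  have hqd : q ∣ N := Nat.dvd_of_mem_primeFactorsList hq
  have : Fact q.Prime := ⟨hqp⟩
  have hne : NeZero q := ⟨hqp.ne_zero⟩
  have hqa : ¬ (q : ℤ) ∣ a := by
    intro hdvd
    have h1 : (q : ℤ) ∣ (Int.gcd (N : ℤ) a : ℤ) :=
      Int.dvd_coe_gcd (Int.natCast_dvd_natCast.2 hqd) hdvd
    rw [h] at h1
    have : q ∣ 1 := by exact_mod_cast h1
    exact hqp.one_lt.ne' (Nat.dvd_one.1 this)
  have ha0 : (a : ZMod q) ≠ 0 := by
    rw [Ne, ZMod.intCast_zmod_eq_zero_iff_dvd]; exact hqa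
  by_cases hq2 : q = 2
  · subst hq2
    have hodd : Odd a :=
      Int.not_even_iff_odd.1 fun he => hqa (by exact_mod_cast he.two_dvd)
    rw [rps_two 2 _ (hodd.pow), rps_two 1 _ hodd]
  · have hodd : q % 2 = 1 := (Nat.Prime.mod_two_eq_one_iff_ne_two hqp).mpr hq2
    rcases show q % 4 = 1 ∨ q % 4 = 3 by omega with h14 | h34
    · rw [rps_one_mod_four q h14 a]
    · obtain ⟨m, hm⟩ := hsq q hqp h34
      rw [rps_three_mod_four q h34 a ha0, one_pow, hm, ← two_mul, pow_mul, rps_sq, one_pow]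
end

section
/- Let N ∈ ℕ be odd with N > 1. If the diophantine equation N = X² + Y² is not solvable over the integers, then there exists a ∈ ℤ with gcd(N, a) = 1 such that (a²|N)_4 ≠ (a|N)_2. -/
lemma rps_cond_iff (k p : ℕ) (a : ℤ) :
    (∃ x : ℤ, x ^ (2 ^ k) ≡ a [ZMOD (p : ℤ)]) ↔ ∃ y : ZMod p, y ^ (2 ^ k) = (a : ZMod p) := by
  constructor
  · rintro ⟨x, hx⟩
    refine ⟨(x : ZMod p), ?_⟩
    have := (ZMod.intCast_eq_intCast_iff _ _ _).mpr hx
    push_cast at this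
    exact this
  · rintro ⟨y, hy⟩
    obtain ⟨x, rfl⟩ := ZMod.intCast_surjective y
    refine ⟨x, (ZMod.intCast_eq_intCast_iff _ _ _).mp ?_⟩
    push_cast
    exact hy

lemma rps_eq_one {k p : ℕ} {a : ℤ} (h : ∃ y : ZMod p, y ^ (2 ^ k) = (a : ZMod p)) :
    rps k p a = 1 := by
  rw [rps, if_pos ((rps_cond_iff k p a).mpr h)]

lemma rps_eq_neg_one {k p : ℕ} {a : ℤ} (h : ¬ ∃ y : ZMod p, y ^ (2 ^ k) = (a : ZMod p)) :
    rps k p a = -1 := by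
  rw [rps, if_neg (fun hc => h ((rps_cond_iff k p a).mp hc))]

/-- For a prime `p ≡ 3 mod 4` and `a` not divisible by `p`, `a^2` is a fourth power mod `p`. -/
lemma rps_two_sq {p : ℕ} [Fact p.Prime] (hp3 : p % 4 = 3) {a : ℤ} (ha : (a : ZMod p) ≠ 0) :
    rps 2 p (a ^ 2) = 1 := by
  apply rps_eq_one
  have hp2 : p ≠ 2 := by omega
  by_cases hsq : IsSquare ((a : ℤ) : ZMod p)
  · obtain ⟨y, hy⟩ := hsq
    refine ⟨y, ?_⟩
    push_cast
    rw [hy]; ring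
  · have h1 : legendreSym p a = -1 := (legendreSym.eq_neg_one_iff p).mpr hsq
    have hneg : legendreSym p (-a) = 1 := by
      have hmul := legendreSym.mul p (-1) a
      rw [neg_one_mul] at hmul
      rw [hmul, legendreSym.at_neg_one hp2, ZMod.χ₄_nat_three_mod_four hp3, h1]; ring
    have hna : ((-a : ℤ) : ZMod p) ≠ 0 := by push_cast; simpa using ha
    have hsq' : IsSquare ((-a : ℤ) : ZMod p) := (legendreSym.eq_one_iff p hna).mp hneg
    obtain ⟨y, hy⟩ := hsq'
    push_cast at hy
    refine ⟨y, ?_⟩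
    push_cast
    calc y ^ (2 ^ 2) = (y * y) ^ 2 := by ring
      _ = (a : ZMod p) ^ 2 := by rw [← hy]; ring

lemma prod_map_count (L : List ℕ) (f : ℕ → ℤ) (q : ℕ) (hq : f q = -1)
    (h : ∀ p ∈ L, p ≠ q → f p = 1) :
    (L.map f).prod = (-1) ^ (L.count q) := by
  induction L with
  | nil => simp
  | cons a t ih =>
    have ht := ih (fun p hp hpq => h p (List.mem_cons_of_mem a hp) hpq)
    by_cases hqa : a = q
    · subst hqa
      simp only [List.map_cons, List.prod_cons, List.count_cons_self, pow_succ, ht, hq]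
      ring
    · rw [List.map_cons, List.prod_cons, h a List.mem_cons_self hqa, one_mul, ht,
        List.count_cons_of_ne hqa]

theorem statement13 (N : ℕ) (hN : Odd N) (hN1 : 1 < N)
    (hsol : ¬ ∃ X Y : ℤ, (N : ℤ) = X ^ 2 + Y ^ 2) :
    ∃ a : ℤ, Int.gcd (N : ℤ) a = 1 ∧ rpsN 2 N (a ^ 2) ≠ rpsN 1 N a := by
  have hNsum : ¬ ∃ x y : ℕ, N = x ^ 2 + y ^ 2 := by
    rintro ⟨x, y, h⟩
    exact hsol ⟨x, y, by exact_mod_cast congrArg (Nat.cast : ℕ → ℤ) h⟩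
  rw [Nat.eq_sq_add_sq_iff] at hNsum
  push_neg at hNsum
  obtain ⟨q, hqmem, hq3, hev⟩ := hNsum
  have hq : q.Prime := Nat.prime_of_mem_primeFactors hqmem
  have hodd : Odd (padicValNat q N) := Nat.not_even_iff_odd.mp hev
  haveI : Fact q.Prime := ⟨hq⟩
  haveI : NeZero q := ⟨hq.pos.ne'⟩
  have hN0 : N ≠ 0 := by omega
  have hfac : N.factorization q = padicValNat q N := Nat.factorization_def N hq
  have hqN : q ∣ N := Nat.dvd_of_factorization_pos (by rw [hfac]; exact hodd.pos.ne')
  set m := ordCompl[q] N with hm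
  have hco : Nat.Coprime q m := Nat.coprime_ordCompl hq hN0
  have hq2 : q ≠ 2 := by omega
  obtain ⟨b, hb⟩ := FiniteField.exists_nonsquare (F := ZMod q)
    (by rw [ZMod.ringChar_zmod_n]; exact fun h => hq2 h)
  have hb0 : b ≠ 0 := fun h => hb (h ▸ ⟨0, by simp⟩)
  obtain ⟨k, hk1, hk2⟩ := Nat.chineseRemainder hco b.val 1
  have hkq : (k : ZMod q) = b := by
    rw [(ZMod.natCast_eq_natCast_iff _ _ _).mpr hk1, ZMod.natCast_zmod_val]
  have hdvdm : ∀ p : ℕ, p.Prime → p ∣ N → p ≠ q → p ∣ m := by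
    intro p hp hpN hpq
    have hd : p ∣ ordProj[q] N * m := by
      rw [hm, Nat.ordProj_mul_ordCompl_eq_self]; exact hpN
    rcases hp.dvd_mul.mp hd with h | h
    · exact absurd ((Nat.prime_dvd_prime_iff_eq hp hq).mp (hp.dvd_of_dvd_pow h)) hpq
    · exact h
  have hkp : ∀ p : ℕ, p.Prime → p ∣ N → p ≠ q → (k : ZMod p) = 1 := by
    intro p hp hpN hpq
    have h1 : k ≡ 1 [MOD p] := hk2.of_dvd (hdvdm p hp hpN hpq)
    have := (ZMod.natCast_eq_natCast_iff _ _ _).mpr h1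
    simpa using this
  refine ⟨(k : ℤ), ?_, ?_⟩
  · rw [Int.gcd_natCast_natCast]
    by_contra hg
    set p := (Nat.gcd N k).minFac with hpdef
    have hp : p.Prime := Nat.minFac_prime hg
    have hpN : p ∣ N := (Nat.minFac_dvd _).trans (Nat.gcd_dvd_left _ _)
    have hpk : p ∣ k := (Nat.minFac_dvd _).trans (Nat.gcd_dvd_right _ _)
    have h0 : (k : ZMod p) = 0 := (ZMod.natCast_eq_zero_iff _ _).mpr hpk
    by_cases hpq : p = q
    · rw [hpq, hkq] at h0; exact hb0 h0
    · haveI : Fact p.Prime := ⟨hp⟩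
      rw [hkp p hp hpN hpq] at h0
      exact one_ne_zero h0
  · have hA : rpsN 2 N ((k : ℤ) ^ 2) = 1 := by
      unfold rpsN
      apply List.prod_eq_one
      intro x hx
      obtain ⟨p, hpmem, rfl⟩ := List.mem_map.mp hx
      have hp : p.Prime := Nat.prime_of_mem_primeFactorsList hpmem
      have hpN : p ∣ N := Nat.dvd_of_mem_primeFactorsList hpmem
      haveI : Fact p.Prime := ⟨hp⟩
      by_cases hpq : p = q
      · subst hpq
        apply rps_two_sq hq3
        push_cast
        rw [hkq]; exact hb0
      · apply rps_eq_one
        refine ⟨1, ?_⟩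
        push_cast
        rw [hkp p hp hpN hpq]
        norm_num
    have hB : rpsN 1 N (k : ℤ) = -1 := by
      unfold rpsN
      rw [prod_map_count _ _ q ?_ ?_]
      · rw [Nat.primeFactorsList_count_eq, hfac]
        exact Odd.neg_one_pow hodd
      · apply rps_eq_neg_one
        rintro ⟨y, hy⟩
        apply hb
        push_cast at hy
        rw [hkq] at hy
        exact ⟨y, by rw [← hy]; ring⟩
      · intro p hpmem hpq
        have hp : p.Prime := Nat.prime_of_mem_primeFactorsList hpmem
        have hpN : p ∣ N := Nat.dvd_of_mem_primeFactorsList hpmem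
        apply rps_eq_one
        refine ⟨1, ?_⟩
        push_cast
        rw [hkp p hp hpN hpq]
        norm_num
    rw [hA, hB]
    norm_num
end
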